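/- Let f: Ω → ℝ² be C² with ∇f nonsingular and orientation-preserving on Ω, and suppose T_h is a family of triangles in Ω with maximum side length h → 0 and aspect ratios uniformly bounded by κ. Then there exists h₀ > 0 such that for all h < h₀, the image triangle (with vertices f(v₁), f(v₂), f(v₃)) of every positively oriented T ∈ T_h is positively oriented. -/

import Mathlib

/-!
Let `s` be the longest side, `A = Df(v₁)`, and let `L`, `M` bound `‖Df‖`, `‖D²f‖` on `K`.
Second-order Taylor expansion at `v₁` gives
`triDet (f v₁) (f v₂) (f v₃) = det A * triDet v₁ v₂ v₃ + R` with `|R| ≤ (2LMs + M²s²) s²`.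
Since twice the area is at least (minimal altitude) × (longest side), an aspect ratio `≤ κ`
gives `s² ≤ κ * triDet v₁ v₂ v₃`. With `σ = min_K det Df > 0` (compactness), the image
orientation is therefore at least `(σ - κ (2LMs + M²s²)) * triDet v₁ v₂ v₃`, which is positive
for small `s`.
-/

noncomputable section

abbrev E2 : Type := EuclideanSpace ℝ (Fin 2)

/-- Orientation determinant `det (v₂ − v₁, v₃ − v₁)` of a triangle. -/
def triDet (v₁ v₂ v₃ : E2) : ℝ :=
  (v₂ - v₁) 0 * (v₃ - v₁) 1 - (v₂ - v₁) 1 * (v₃ - v₁) 0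

/-- Maximum side length of a triangle. -/
def maxSide (v₁ v₂ v₃ : E2) : ℝ :=
  max (dist v₁ v₂) (max (dist v₂ v₃) (dist v₁ v₃))

/-- Minimum altitude of a triangle: the least distance from a vertex to the
affine span of the opposite edge. -/
def minAlt (v₁ v₂ v₃ : E2) : ℝ :=
  min (Metric.infDist v₁ (affineSpan ℝ {v₂, v₃} : Set E2))
    (min (Metric.infDist v₂ (affineSpan ℝ {v₁, v₃} : Set E2))
      (Metric.infDist v₃ (affineSpan ℝ {v₁, v₂} : Set E2)))

/-- Aspect ratio: maximum side length divided by minimum altitude. -/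
def aspectRatio (v₁ v₂ v₃ : E2) : ℝ := maxSide v₁ v₂ v₃ / minAlt v₁ v₂ v₃

open Topology

section Taylor

variable {E F : Type*} [NormedAddCommGroup E] [NormedSpace ℝ E]
  [NormedAddCommGroup F] [NormedSpace ℝ F]

theorem Convex.norm_image_sub_sub_fderiv_le {f : E → F} {s : Set E} {M : ℝ} (hs : Convex ℝ s)
    (hf : ∀ z ∈ s, DifferentiableAt ℝ f z) (hf' : ∀ z ∈ s, DifferentiableAt ℝ (fderiv ℝ f) z)
    (hM : ∀ z ∈ s, ‖fderiv ℝ (fderiv ℝ f) z‖ ≤ M) {x y : E} (hx : x ∈ s) (hy : y ∈ s) :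
    ‖f y - f x - fderiv ℝ f x (y - x)‖ ≤ M * ‖y - x‖ ^ 2 := by
  have hseg : segment ℝ x y ⊆ s := hs.segment_subset hx hy
  have hM₀ : 0 ≤ M := (norm_nonneg (fderiv ℝ (fderiv ℝ f) x)).trans (hM x hx)
  have hlip : ∀ z ∈ segment ℝ x y, ‖fderiv ℝ f z - fderiv ℝ f x‖ ≤ M * ‖y - x‖ := fun z hz =>
    calc ‖fderiv ℝ f z - fderiv ℝ f x‖ ≤ M * ‖z - x‖ :=
          (convex_segment x y).norm_image_sub_le_of_norm_fderiv_le (fun w hw => hf' w (hseg hw))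
            (fun w hw => hM w (hseg hw)) (left_mem_segment ℝ x y) hz
      _ ≤ M * ‖y - x‖ := by gcongr; exact norm_sub_le_of_mem_segment hz
  calc ‖f y - f x - fderiv ℝ f x (y - x)‖ ≤ M * ‖y - x‖ * ‖y - x‖ :=
        (convex_segment x y).norm_image_sub_le_of_norm_fderiv_le' (fun w hw => hf w (hseg hw))
          hlip (left_mem_segment ℝ x y) (right_mem_segment ℝ x y)
    _ = M * ‖y - x‖ ^ 2 := by ring

end Taylor

def det2 (a b : E2) : ℝ := a 0 * b 1 - a 1 * b 0

lemma triDet_eq_det2 (v₁ v₂ v₃ : E2) : triDet v₁ v₂ v₃ = det2 (v₂ - v₁) (v₃ - v₁) := rfl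

lemma det2_add_add (a b c d : E2) :
    det2 (a + b) (c + d) = det2 a c + det2 a d + det2 b c + det2 b d := by
  simp only [det2, PiLp.add_apply]
  ring

lemma abs_det2_le (a b : E2) : |det2 a b| ≤ ‖a‖ * ‖b‖ := by
  refine abs_le_of_sq_le_sq ?_ (by positivity)
  rw [mul_pow, EuclideanSpace.real_norm_sq_eq, EuclideanSpace.real_norm_sq_eq, Fin.sum_univ_two,
    Fin.sum_univ_two, det2]
  nlinarith [sq_nonneg (a 0 * b 0 + a 1 * b 1)]

lemma det2_map (A : E2 →L[ℝ] E2) (a b : E2) :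
    det2 (A a) (A b) = LinearMap.det (A : E2 →ₗ[ℝ] E2) * det2 a b := by
  have hdet : LinearMap.det (A : E2 →ₗ[ℝ] E2)
      = A (EuclideanSpace.single 0 1) 0 * A (EuclideanSpace.single 1 1) 1
        - A (EuclideanSpace.single 0 1) 1 * A (EuclideanSpace.single 1 1) 0 := by
    rw [← LinearMap.det_toMatrix (EuclideanSpace.basisFun (Fin 2) ℝ).toBasis, Matrix.det_fin_two]
    simp only [LinearMap.toMatrix_apply, OrthonormalBasis.coe_toBasis,
      EuclideanSpace.basisFun_apply, ContinuousLinearMap.coe_coe,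
      OrthonormalBasis.coe_toBasis_repr_apply, EuclideanSpace.basisFun_repr]
    ring
  have happ : ∀ (x : E2) (i : Fin 2), A x i
      = x 0 * A (EuclideanSpace.single 0 1) i + x 1 * A (EuclideanSpace.single 1 1) i := by
    intro x i
    conv_lhs => rw [show x = x 0 • EuclideanSpace.single 0 1 + x 1 • EuclideanSpace.single 1 1 by
      ext j; fin_cases j <;> simp]
    simp
  simp only [det2]
  rw [happ a 0, happ a 1, happ b 0, happ b 1, hdet]
  ring

lemma abs_det2_map_add_sub_le (A : E2 →L[ℝ] E2) {a b e e' : E2} {L s ε : ℝ} (hA : ‖A‖ ≤ L)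
    (ha : ‖a‖ ≤ s) (hb : ‖b‖ ≤ s) (he : ‖e‖ ≤ ε) (he' : ‖e'‖ ≤ ε) :
    |det2 (A a + e) (A b + e') - LinearMap.det (A : E2 →ₗ[ℝ] E2) * det2 a b|
      ≤ 2 * L * s * ε + ε ^ 2 := by
  have hAa : ‖A a‖ ≤ L * s := A.le_of_opNorm_le_of_le hA ha
  have hAb : ‖A b‖ ≤ L * s := A.le_of_opNorm_le_of_le hA hb
  have hε : 0 ≤ ε := (norm_nonneg e).trans he
  have hLs : 0 ≤ L * s := (norm_nonneg _).trans hAa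
  rw [det2_add_add, det2_map]
  calc |LinearMap.det (A : E2 →ₗ[ℝ] E2) * det2 a b + det2 (A a) e' + det2 e (A b) + det2 e e'
          - LinearMap.det (A : E2 →ₗ[ℝ] E2) * det2 a b|
        = |det2 (A a) e' + det2 e (A b) + det2 e e'| := by ring_nf
    _ ≤ |det2 (A a) e'| + |det2 e (A b)| + |det2 e e'| :=
        (abs_add_le _ _).trans (add_le_add_left (abs_add_le _ _) _)
    _ ≤ ‖A a‖ * ‖e'‖ + ‖e‖ * ‖A b‖ + ‖e‖ * ‖e'‖ :=
        add_le_add (add_le_add (abs_det2_le _ _) (abs_det2_le _ _)) (abs_det2_le _ _)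
    _ ≤ L * s * ε + ε * (L * s) + ε * ε := by gcongr
    _ = 2 * L * s * ε + ε ^ 2 := by ring

lemma maxSide_nonneg (v₁ v₂ v₃ : E2) : 0 ≤ maxSide v₁ v₂ v₃ :=
  le_max_of_le_left dist_nonneg

lemma norm_sub_le_maxSide₁₂ (v₁ v₂ v₃ : E2) : ‖v₂ - v₁‖ ≤ maxSide v₁ v₂ v₃ := by
  rw [← dist_eq_norm, dist_comm]
  exact le_max_left _ _

lemma norm_sub_le_maxSide₁₃ (v₁ v₂ v₃ : E2) : ‖v₃ - v₁‖ ≤ maxSide v₁ v₂ v₃ := by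
  rw [← dist_eq_norm, dist_comm]
  exact (le_max_right _ _).trans (le_max_right _ _)

lemma abs_triDet_sub_det_mul_triDet_le (A : E2 →L[ℝ] E2) {v₁ v₂ v₃ w₁ w₂ w₃ : E2} {L ε : ℝ}
    (hA : ‖A‖ ≤ L) (h₂ : ‖w₂ - w₁ - A (v₂ - v₁)‖ ≤ ε) (h₃ : ‖w₃ - w₁ - A (v₃ - v₁)‖ ≤ ε) :
    |triDet w₁ w₂ w₃ - LinearMap.det (A : E2 →ₗ[ℝ] E2) * triDet v₁ v₂ v₃|
      ≤ 2 * L * maxSide v₁ v₂ v₃ * ε + ε ^ 2 := by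
  have h := abs_det2_map_add_sub_le A hA (norm_sub_le_maxSide₁₂ v₁ v₂ v₃)
    (norm_sub_le_maxSide₁₃ v₁ v₂ v₃) h₂ h₃
  rwa [add_sub_cancel, add_sub_cancel, ← triDet_eq_det2, ← triDet_eq_det2] at h

lemma triDet_rotate (v₁ v₂ v₃ : E2) : triDet v₂ v₃ v₁ = triDet v₁ v₂ v₃ := by
  simp only [triDet, PiLp.sub_apply]
  ring

lemma triDet_swap (v₁ v₂ v₃ : E2) : triDet v₁ v₃ v₂ = -triDet v₁ v₂ v₃ := by
  simp only [triDet, PiLp.sub_apply]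
  ring

lemma infDist_mul_dist_le_abs_triDet (p₁ p₂ p₃ : E2) :
    Metric.infDist p₃ (affineSpan ℝ {p₁, p₂} : Set E2) * dist p₁ p₂ ≤ |triDet p₁ p₂ p₃| := by
  rcases eq_or_ne p₁ p₂ with rfl | h
  · simp
  set u := p₂ - p₁
  set w := p₃ - p₁
  have hu : 0 < u 0 ^ 2 + u 1 ^ 2 := by
    rw [← Fin.sum_univ_two (fun i => u i ^ 2), ← EuclideanSpace.real_norm_sq_eq]
    exact pow_pos (norm_pos_iff.2 (sub_ne_zero.2 h.symm)) 2
  -- the foot of the altitude from `p₃`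
  set q := AffineMap.lineMap p₁ p₂ ((u 0 * w 0 + u 1 * w 1) / (u 0 ^ 2 + u 1 ^ 2))
  have hfoot : (dist p₃ q * dist p₁ p₂) ^ 2 = |triDet p₁ p₂ p₃| ^ 2 := by
    rw [mul_pow, dist_eq_norm, dist_eq_norm, EuclideanSpace.real_norm_sq_eq,
      EuclideanSpace.real_norm_sq_eq, sq_abs, triDet]
    simp only [q, u, w, AffineMap.lineMap_apply_module, Fin.sum_univ_two, PiLp.sub_apply,
      PiLp.add_apply, PiLp.smul_apply, smul_eq_mul] at hu ⊢
    field_simp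
    ring
  calc Metric.infDist p₃ (affineSpan ℝ {p₁, p₂} : Set E2) * dist p₁ p₂
        ≤ dist p₃ q * dist p₁ p₂ := by
          gcongr
          exact Metric.infDist_le_dist_of_mem (AffineMap.lineMap_mem_affineSpan_pair _ _ _)
    _ = |triDet p₁ p₂ p₃| := (pow_left_inj₀ (by positivity) (abs_nonneg _) two_ne_zero).1 hfoot

lemma minAlt_mul_maxSide_le_abs_triDet (v₁ v₂ v₃ : E2) :
    minAlt v₁ v₂ v₃ * maxSide v₁ v₂ v₃ ≤ |triDet v₁ v₂ v₃| := by
  have hα : 0 ≤ minAlt v₁ v₂ v₃ :=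
    le_min Metric.infDist_nonneg (le_min Metric.infDist_nonneg Metric.infDist_nonneg)
  rw [maxSide, mul_max_of_nonneg _ _ hα, mul_max_of_nonneg _ _ hα]
  refine max_le ?_ (max_le ?_ ?_)
  · refine (mul_le_mul_of_nonneg_right ?_ dist_nonneg).trans (infDist_mul_dist_le_abs_triDet _ _ _)
    exact (min_le_right _ _).trans (min_le_right _ _)
  · refine (mul_le_mul_of_nonneg_right (min_le_left _ _) dist_nonneg).trans ?_
    simpa only [triDet_rotate] using infDist_mul_dist_le_abs_triDet v₂ v₃ v₁
  · refine (mul_le_mul_of_nonneg_right ((min_le_right _ _).trans (min_le_left _ _))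
      dist_nonneg).trans ?_
    rw [← abs_neg, ← triDet_swap]
    exact infDist_mul_dist_le_abs_triDet v₁ v₃ v₂

lemma sq_maxSide_le_mul_abs_triDet {v₁ v₂ v₃ : E2} {κ : ℝ} (hα : 0 < minAlt v₁ v₂ v₃)
    (hκ : aspectRatio v₁ v₂ v₃ ≤ κ) : maxSide v₁ v₂ v₃ ^ 2 ≤ κ * |triDet v₁ v₂ v₃| := by
  have hs₀ := maxSide_nonneg v₁ v₂ v₃
  have hκ₀ : 0 ≤ κ := (div_nonneg hs₀ hα.le).trans hκ
  have hs : maxSide v₁ v₂ v₃ ≤ κ * minAlt v₁ v₂ v₃ := (div_le_iff₀ hα).1 hκ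
  calc maxSide v₁ v₂ v₃ ^ 2 ≤ κ * minAlt v₁ v₂ v₃ * maxSide v₁ v₂ v₃ := by
        rw [sq]; exact mul_le_mul_of_nonneg_right hs hs₀
    _ = κ * (minAlt v₁ v₂ v₃ * maxSide v₁ v₂ v₃) := mul_assoc _ _ _
    _ ≤ κ * |triDet v₁ v₂ v₃| :=
        mul_le_mul_of_nonneg_left (minAlt_mul_maxSide_le_abs_triDet v₁ v₂ v₃) hκ₀

theorem triDet_comp_pos {f : E2 → E2} {v₁ v₂ v₃ : E2} {L M σ κ : ℝ}
    (hf : ∀ z ∈ convexHull ℝ {v₁, v₂, v₃}, DifferentiableAt ℝ f z)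
    (hf' : ∀ z ∈ convexHull ℝ {v₁, v₂, v₃}, DifferentiableAt ℝ (fderiv ℝ f) z)
    (hL : ‖fderiv ℝ f v₁‖ ≤ L)
    (hM : ∀ z ∈ convexHull ℝ {v₁, v₂, v₃}, ‖fderiv ℝ (fderiv ℝ f) z‖ ≤ M)
    (hσ : σ ≤ LinearMap.det ((fderiv ℝ f v₁ : E2 →L[ℝ] E2) : E2 →ₗ[ℝ] E2))
    (hD : 0 < triDet v₁ v₂ v₃) (hα : 0 < minAlt v₁ v₂ v₃) (hκ : aspectRatio v₁ v₂ v₃ ≤ κ)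
    (hsmall : κ * (2 * L * M * maxSide v₁ v₂ v₃ + M ^ 2 * maxSide v₁ v₂ v₃ ^ 2) < σ) :
    0 < triDet (f v₁) (f v₂) (f v₃) := by
  set s := maxSide v₁ v₂ v₃
  have hmem : ∀ v ∈ ({v₁, v₂, v₃} : Set E2), v ∈ convexHull ℝ {v₁, v₂, v₃} :=
    subset_convexHull ℝ _
  have hv₁ := hmem v₁ (by simp)
  have hM₀ : 0 ≤ M := (norm_nonneg (fderiv ℝ (fderiv ℝ f) v₁)).trans (hM v₁ hv₁)
  have hTaylor : ∀ v ∈ ({v₁, v₂, v₃} : Set E2), ‖v - v₁‖ ≤ s →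
      ‖f v - f v₁ - fderiv ℝ f v₁ (v - v₁)‖ ≤ M * s ^ 2 := fun v hv hvs =>
    ((convex_convexHull ℝ _).norm_image_sub_sub_fderiv_le hf hf' hM hv₁ (hmem v hv)).trans
      (by gcongr)
  have hR := abs_triDet_sub_det_mul_triDet_le (fderiv ℝ f v₁) hL
    (hTaylor v₂ (by simp) (norm_sub_le_maxSide₁₂ v₁ v₂ v₃))
    (hTaylor v₃ (by simp) (norm_sub_le_maxSide₁₃ v₁ v₂ v₃))
  have hshape := sq_maxSide_le_mul_abs_triDet hα hκ
  rw [abs_of_pos hD] at hshape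
  set c := 2 * L * M * s + M ^ 2 * s ^ 2
  have hc : 0 ≤ c := by
    have := (norm_nonneg _).trans hL
    have := maxSide_nonneg v₁ v₂ v₃
    positivity
  calc 0 < (σ - κ * c) * triDet v₁ v₂ v₃ := mul_pos (sub_pos.2 hsmall) hD
    _ ≤ LinearMap.det ((fderiv ℝ f v₁ : E2 →L[ℝ] E2) : E2 →ₗ[ℝ] E2) * triDet v₁ v₂ v₃
          - c * s ^ 2 := by
        linarith [mul_le_mul_of_nonneg_right hσ hD.le, mul_le_mul_of_nonneg_left hshape hc]
    _ ≤ triDet (f v₁) (f v₂) (f v₃) := by linarith [(abs_le.1 hR).1]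

theorem no_type2_reversals_for_refined_meshes_general
    (Ω : Set E2) (hΩ : IsOpen Ω) (K : Set E2) (hK : IsCompact K) (hKΩ : K ⊆ Ω)
    (f : E2 → E2) (hf : ContDiffOn ℝ 2 f Ω)
    (hdet : ∀ x ∈ Ω, 0 < LinearMap.det ((fderiv ℝ f x : E2 →L[ℝ] E2) : E2 →ₗ[ℝ] E2))
    (κ : ℝ) :
    ∃ h₀ : ℝ, 0 < h₀ ∧
      ∀ v₁ v₂ v₃ : E2,
        convexHull ℝ {v₁, v₂, v₃} ⊆ K →
        0 < triDet v₁ v₂ v₃ →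
        0 < minAlt v₁ v₂ v₃ →
        maxSide v₁ v₂ v₃ < h₀ →
        aspectRatio v₁ v₂ v₃ ≤ κ →
        0 < triDet (f v₁) (f v₂) (f v₃) := by
  have hDf : ContDiffOn ℝ 1 (fderiv ℝ f) Ω := hf.fderiv_of_isOpen hΩ (by norm_num)
  have hdiff : ∀ z ∈ K, DifferentiableAt ℝ f z ∧ DifferentiableAt ℝ (fderiv ℝ f) z := fun z hz =>
    ⟨(hf.differentiableOn two_ne_zero z (hKΩ hz)).differentiableAt (hΩ.mem_nhds (hKΩ hz)),
      (hDf.differentiableOn one_ne_zero z (hKΩ hz)).differentiableAt (hΩ.mem_nhds (hKΩ hz))⟩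
  obtain ⟨L, hL⟩ := hK.exists_bound_of_continuousOn (hDf.continuousOn.mono hKΩ)
  obtain ⟨M, hM⟩ := hK.exists_bound_of_continuousOn
    ((hDf.continuousOn_fderiv_of_isOpen hΩ le_rfl).mono hKΩ)
  obtain ⟨σ, hσ, hσK⟩ := hK.exists_forall_le'
    ((ContinuousLinearMap.continuous_det.comp_continuousOn hDf.continuousOn).mono hKΩ)
    fun x hx => hdet x (hKΩ hx)
  have hsmall : ∀ᶠ h in 𝓝 (0 : ℝ), κ * (2 * L * M * h + M ^ 2 * h ^ 2) < σ :=
    ContinuousAt.eventually_lt (by fun_prop) continuousAt_const (by simpa using hσ)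
  obtain ⟨h₀, hh₀, hh₀small⟩ := Metric.eventually_nhds_iff.1 hsmall
  refine ⟨h₀, hh₀, fun v₁ v₂ v₃ hsub hD hα hs hκ => ?_⟩
  have hv₁ : v₁ ∈ K := hsub (subset_convexHull ℝ _ (by simp))
  refine triDet_comp_pos (fun z hz => (hdiff z (hsub hz)).1) (fun z hz => (hdiff z (hsub hz)).2)
    (hL v₁ hv₁) (fun z hz => hM z (hsub hz)) (hσK v₁ hv₁) hD hα hκ (hh₀small ?_)
  rwa [Real.dist_eq, sub_zero, abs_of_nonneg (maxSide_nonneg v₁ v₂ v₃)]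

/-- No Type 2 reversals on sufficiently refined meshes of bounded aspect
ratio: if `f` is `C²` with nonsingular orientation-preserving Jacobian on an
open set `Ω` and the triangles lie in a compact subset `K ⊆ Ω`, then for any
aspect-ratio bound `κ` there is `h₀ > 0` such that every positively oriented
nondegenerate triangle in `K` with maximum side length below `h₀` and aspect
ratio at most `κ` has a positively oriented image under `f`. -/
theorem no_type2_reversals_for_refined_meshes
    (Ω : Set E2) (hΩ : IsOpen Ω) (K : Set E2) (hK : IsCompact K) (hKΩ : K ⊆ Ω)
    (f : E2 → E2) (hf : ContDiffOn ℝ 2 f Ω)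
    (hdet : ∀ x ∈ Ω, 0 < LinearMap.det ((fderiv ℝ f x : E2 →L[ℝ] E2) : E2 →ₗ[ℝ] E2))
    (κ : ℝ) (hκ : 0 < κ) :
    ∃ h₀ : ℝ, 0 < h₀ ∧
      ∀ v₁ v₂ v₃ : E2,
        convexHull ℝ {v₁, v₂, v₃} ⊆ K →
        0 < triDet v₁ v₂ v₃ →
        0 < minAlt v₁ v₂ v₃ →
        maxSide v₁ v₂ v₃ < h₀ →
        aspectRatio v₁ v₂ v₃ ≤ κ →
        0 < triDet (f v₁) (f v₂) (f v₃) :=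
  no_type2_reversals_for_refined_meshes_general Ω hΩ K hK hKΩ f hf hdet κ

end
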